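/- arXiv:2112.05515 — 2 statements merged into one kernel-verified Lean document; each statement's English description precedes it below -/
import Mathlib

section
/- Let C be the Moore collection on P(Bunch) generated by principal sets ⟦φ⟧ = {Δ | Δ ⊢cf φ} (closed sets are arbitrary intersections of principal sets). Then every closed set X satisfies: (1) the singleton-leaf bunch ⊥ is in X; (2) if Δ ∈ X then (Δ ; Δ') ∈ X for any bunch Δ'; (3) if (Δ ; Δ) ∈ X then Δ ∈ X; (4) Δ ∈ X iff the formula-collapse bunch ⟨Δ⟩ ∈ X. -/
/-!
A closed set `X` is the intersection of the `⟦φ⟧` containing it, so `Δ ∈ X` means that `Δ ⊢ φ`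
for every `φ` with `X ⊆ ⟦φ⟧`. Each law therefore reduces to an admissible rule of the cut-free
calculus: `⊥L`, weakening and contraction give the first three, and the last says that a bunch
and its collapse can replace each other in any antecedent. One direction is repeated use of the
left rules for `emp`, `⊤`, `∗`, `∧`. The other is their invertibility: replacing *every* leaf `ψ`
of a derivation by the premise bunch of its left rule preserves provability (an occurrence that
was principal in a left rule now already stands in the premise's shape), and all occurrences
except the intended one are then folded back by the left rule.
-/

/-- Formulas of BI. -/
inductive Frml : Type
  | atom : Nat → Frml
  | top : Frml
  | bot : Frml
  | emp : Frml
  | and : Frml → Frml → Frml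
  | or : Frml → Frml → Frml
  | imp : Frml → Frml → Frml
  | sep : Frml → Frml → Frml
  | wand : Frml → Frml → Frml

/-- Bunches: trees with formula leaves, multiplicative/additive units and nodes. -/
inductive Bunch : Type
  | frml : Frml → Bunch
  | mempty : Bunch    -- ∅ₘ
  | aempty : Bunch    -- ∅ₐ
  | comma : Bunch → Bunch → Bunch   -- multiplicative ','
  | semic : Bunch → Bunch → Bunch   -- additive ';'

/-- Bunched contexts: bunches with a single hole. -/
inductive BCtx : Type
  | hole : BCtx
  | commaL : BCtx → Bunch → BCtx
  | commaR : Bunch → BCtx → BCtx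
  | semicL : BCtx → Bunch → BCtx
  | semicR : Bunch → BCtx → BCtx

/-- Filling the hole of a bunched context with a bunch. -/
def BCtx.fill : BCtx → Bunch → Bunch
  | .hole, Δ => Δ
  | .commaL C Γ, Δ => .comma (C.fill Δ) Γ
  | .commaR Γ C, Δ => .comma Γ (C.fill Δ)
  | .semicL C Γ, Δ => .semic (C.fill Δ) Γ
  | .semicR Γ C, Δ => .semic Γ (C.fill Δ)

/-- Equivalence of bunches: commutative-monoid laws for (',', ∅ₘ) and (';', ∅ₐ),
under arbitrary bunched contexts. -/
inductive BEquiv : Bunch → Bunch → Prop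
  | refl (Δ : Bunch) : BEquiv Δ Δ
  | symm {Δ Δ' : Bunch} : BEquiv Δ Δ' → BEquiv Δ' Δ
  | trans {Δ₁ Δ₂ Δ₃ : Bunch} : BEquiv Δ₁ Δ₂ → BEquiv Δ₂ Δ₃ → BEquiv Δ₁ Δ₃
  | commaComm (Δ₁ Δ₂ : Bunch) : BEquiv (.comma Δ₁ Δ₂) (.comma Δ₂ Δ₁)
  | semicComm (Δ₁ Δ₂ : Bunch) : BEquiv (.semic Δ₁ Δ₂) (.semic Δ₂ Δ₁)
  | commaAssoc (Δ₁ Δ₂ Δ₃ : Bunch) :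
      BEquiv (.comma Δ₁ (.comma Δ₂ Δ₃)) (.comma (.comma Δ₁ Δ₂) Δ₃)
  | semicAssoc (Δ₁ Δ₂ Δ₃ : Bunch) :
      BEquiv (.semic Δ₁ (.semic Δ₂ Δ₃)) (.semic (.semic Δ₁ Δ₂) Δ₃)
  | commaUnit (Δ : Bunch) : BEquiv (.comma Δ .mempty) Δ
  | semicUnit (Δ : Bunch) : BEquiv (.semic Δ .aempty) Δ
  | ctx (C : BCtx) {Δ Δ' : Bunch} : BEquiv Δ Δ' → BEquiv (C.fill Δ) (C.fill Δ')

/-- Cut-free sequent calculus for BI, with the axiom rule restricted to atoms. -/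
inductive Proves : Bunch → Frml → Prop
  | ax (a : Nat) : Proves (.frml (.atom a)) (.atom a)
  | equiv {Δ Δ' : Bunch} {φ : Frml} :
      Proves Δ' φ → BEquiv Δ Δ' → Proves Δ φ
  | weaken (C : BCtx) {Δ₁ Δ₂ : Bunch} {φ : Frml} :
      Proves (C.fill Δ₁) φ → Proves (C.fill (.semic Δ₁ Δ₂)) φ
  | contract (C : BCtx) {Δ₁ : Bunch} {φ : Frml} :
      Proves (C.fill (.semic Δ₁ Δ₁)) φ → Proves (C.fill Δ₁) φ
  | empR : Proves .mempty .emp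
  | empL (C : BCtx) {φ : Frml} :
      Proves (C.fill .mempty) φ → Proves (C.fill (.frml .emp)) φ
  | sepR {Δ₁ Δ₂ : Bunch} {φ ψ : Frml} :
      Proves Δ₁ φ → Proves Δ₂ ψ → Proves (.comma Δ₁ Δ₂) (.sep φ ψ)
  | sepL (C : BCtx) {φ ψ χ : Frml} :
      Proves (C.fill (.comma (.frml φ) (.frml ψ))) χ →
      Proves (C.fill (.frml (.sep φ ψ))) χ
  | wandR {Δ : Bunch} {φ ψ : Frml} :
      Proves (.comma Δ (.frml φ)) ψ → Proves Δ (.wand φ ψ)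
  | wandL (C : BCtx) {Δ₁ Δ₂ : Bunch} {φ ψ χ : Frml} :
      Proves Δ₁ φ → Proves (C.fill (.comma Δ₂ (.frml ψ))) χ →
      Proves (C.fill (.comma (.comma Δ₁ Δ₂) (.frml (.wand φ ψ)))) χ
  | topR : Proves .aempty .top
  | topL (C : BCtx) {φ : Frml} :
      Proves (C.fill .aempty) φ → Proves (C.fill (.frml .top)) φ
  | andR {Δ₁ Δ₂ : Bunch} {φ ψ : Frml} :
      Proves Δ₁ φ → Proves Δ₂ ψ → Proves (.semic Δ₁ Δ₂) (.and φ ψ)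
  | andL (C : BCtx) {φ ψ χ : Frml} :
      Proves (C.fill (.semic (.frml φ) (.frml ψ))) χ →
      Proves (C.fill (.frml (.and φ ψ))) χ
  | impR {Δ : Bunch} {φ ψ : Frml} :
      Proves (.semic Δ (.frml φ)) ψ → Proves Δ (.imp φ ψ)
  | impL (C : BCtx) {Δ₁ Δ₂ : Bunch} {φ ψ χ : Frml} :
      Proves Δ₁ φ → Proves (C.fill (.semic Δ₂ (.frml ψ))) χ →
      Proves (C.fill (.semic (.semic Δ₁ Δ₂) (.frml (.imp φ ψ)))) χ
  | botL (C : BCtx) {φ : Frml} : Proves (C.fill (.frml .bot)) φ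
  | orR1 {Δ : Bunch} {φ ψ : Frml} : Proves Δ φ → Proves Δ (.or φ ψ)
  | orR2 {Δ : Bunch} {φ ψ : Frml} : Proves Δ ψ → Proves Δ (.or φ ψ)
  | orL (C : BCtx) {φ ψ χ : Frml} :
      Proves (C.fill (.frml φ)) χ → Proves (C.fill (.frml ψ)) χ →
      Proves (C.fill (.frml (.or φ ψ))) χ

/-- The formula collapse `⟨Δ⟩` of a bunch. -/
def Bunch.collapse : Bunch → Frml
  | .frml φ => φ
  | .mempty => .emp
  | .aempty => .top
  | .comma Δ₁ Δ₂ => .sep Δ₁.collapse Δ₂.collapse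
  | .semic Δ₁ Δ₂ => .and Δ₁.collapse Δ₂.collapse

/-- The principal closed set `⟦φ⟧ = {Δ | Δ ⊢cf φ}`. -/
def pr (φ : Frml) : Set Bunch := {Δ | Proves Δ φ}

/-- The Moore closure generated by the principal sets:
`cl X = ⋂ {⟦φ⟧ | X ⊆ ⟦φ⟧}`. -/
def clB (X : Set Bunch) : Set Bunch := ⋂₀ {Y | ∃ φ : Frml, Y = pr φ ∧ X ⊆ Y}

/-- A set of bunches is closed if it is a fixpoint of the closure operator. -/
def ClosedB (X : Set Bunch) : Prop := clB X = X

def BCtx.comp : BCtx → BCtx → BCtx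
  | .hole, D => D
  | .commaL C Γ, D => .commaL (C.comp D) Γ
  | .commaR Γ C, D => .commaR Γ (C.comp D)
  | .semicL C Γ, D => .semicL (C.comp D) Γ
  | .semicR Γ C, D => .semicR Γ (C.comp D)

theorem BCtx.fill_comp (C D : BCtx) (Δ : Bunch) : (C.comp D).fill Δ = C.fill (D.fill Δ) := by
  induction C <;> simp only [BCtx.comp, BCtx.fill, *]

def ReplaceableBy (Δ Δ' : Bunch) : Prop :=
  ∀ (C : BCtx) {χ : Frml}, Proves (C.fill Δ) χ → Proves (C.fill Δ') χ

namespace ReplaceableBy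

theorem refl (Δ : Bunch) : ReplaceableBy Δ Δ := fun _ _ h => h

theorem trans {Δ₁ Δ₂ Δ₃ : Bunch} (h₁₂ : ReplaceableBy Δ₁ Δ₂) (h₂₃ : ReplaceableBy Δ₂ Δ₃) :
    ReplaceableBy Δ₁ Δ₃ :=
  fun C _ h => h₂₃ C (h₁₂ C h)

theorem inContext {Δ Δ' : Bunch} (h : ReplaceableBy Δ Δ') (D : BCtx) :
    ReplaceableBy (D.fill Δ) (D.fill Δ') := by
  intro C χ hp
  rw [← BCtx.fill_comp] at hp ⊢
  exact h _ hp

theorem comma {Δ₁ Δ₁' Δ₂ Δ₂' : Bunch} (h₁ : ReplaceableBy Δ₁ Δ₁') (h₂ : ReplaceableBy Δ₂ Δ₂') :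
    ReplaceableBy (.comma Δ₁ Δ₂) (.comma Δ₁' Δ₂') :=
  (h₁.inContext (.commaL .hole Δ₂)).trans (h₂.inContext (.commaR Δ₁' .hole))

theorem semic {Δ₁ Δ₁' Δ₂ Δ₂' : Bunch} (h₁ : ReplaceableBy Δ₁ Δ₁') (h₂ : ReplaceableBy Δ₂ Δ₂') :
    ReplaceableBy (.semic Δ₁ Δ₂) (.semic Δ₁' Δ₂') :=
  (h₁.inContext (.semicL .hole Δ₂)).trans (h₂.inContext (.semicR Δ₁' .hole))

end ReplaceableBy

/-- What the left rule for `ψ` puts in place of `ψ` in its premise; `.frml ψ` if there is no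
such single-premise rule. -/
def Frml.unfold : Frml → Bunch
  | .emp => .mempty
  | .top => .aempty
  | .sep φ ψ => .comma (.frml φ) (.frml ψ)
  | .and φ ψ => .semic (.frml φ) (.frml ψ)
  | φ => .frml φ

theorem Frml.unfold_replaceableBy (ψ : Frml) : ReplaceableBy ψ.unfold (.frml ψ) := by
  cases ψ with
  | emp => exact .empL
  | top => exact .topL
  | sep => exact fun C _ h => .sepL C h
  | and => exact fun C _ h => .andL C h
  | _ => exact .refl _

section Subst

variable (ψ₀ : Frml)

open Classical in
noncomputable def Bunch.subst : Bunch → Bunch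
  | .frml ψ => if ψ = ψ₀ then ψ₀.unfold else .frml ψ
  | .mempty => .mempty
  | .aempty => .aempty
  | .comma Δ₁ Δ₂ => .comma (Δ₁.subst) (Δ₂.subst)
  | .semic Δ₁ Δ₂ => .semic (Δ₁.subst) (Δ₂.subst)

noncomputable def BCtx.subst : BCtx → BCtx
  | .hole => .hole
  | .commaL C Γ => .commaL (C.subst) (Γ.subst ψ₀)
  | .commaR Γ C => .commaR (Γ.subst ψ₀) (C.subst)
  | .semicL C Γ => .semicL (C.subst) (Γ.subst ψ₀)
  | .semicR Γ C => .semicR (Γ.subst ψ₀) (C.subst)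

theorem Bunch.subst_fill (C : BCtx) (Δ : Bunch) :
    (C.fill Δ).subst ψ₀ = (C.subst ψ₀).fill (Δ.subst ψ₀) := by
  induction C <;> simp only [BCtx.fill, Bunch.subst, BCtx.subst, *]

@[simp]
theorem Bunch.subst_comma (Δ₁ Δ₂ : Bunch) :
    (Bunch.comma Δ₁ Δ₂).subst ψ₀ = .comma (Δ₁.subst ψ₀) (Δ₂.subst ψ₀) := rfl

@[simp]
theorem Bunch.subst_semic (Δ₁ Δ₂ : Bunch) :
    (Bunch.semic Δ₁ Δ₂).subst ψ₀ = .semic (Δ₁.subst ψ₀) (Δ₂.subst ψ₀) := rfl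

@[simp]
theorem Bunch.subst_frml_self : (Bunch.frml ψ₀).subst ψ₀ = ψ₀.unfold := if_pos rfl

theorem Bunch.subst_frml_of_ne {ψ : Frml} (h : ψ ≠ ψ₀) : (Bunch.frml ψ).subst ψ₀ = .frml ψ :=
  if_neg h

theorem Bunch.subst_frml_of_unfold_eq {ψ : Frml} (h : ψ.unfold = .frml ψ) :
    (Bunch.frml ψ).subst ψ₀ = .frml ψ := by
  by_cases hψ : ψ = ψ₀
  · subst hψ; rw [subst_frml_self, h]
  · exact subst_frml_of_ne ψ₀ hψ

theorem Frml.unfold_subst_self : ψ₀.unfold.subst ψ₀ = ψ₀.unfold := by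
  cases ψ₀ with
  | sep φ ψ =>
    have hφ : φ ≠ φ.sep ψ := fun h => by cases h
    have hψ : ψ ≠ φ.sep ψ := fun h => by cases h
    simp only [Frml.unfold, Bunch.subst, if_neg hφ, if_neg hψ]
  | and φ ψ =>
    have hφ : φ ≠ φ.and ψ := fun h => by cases h
    have hψ : ψ ≠ φ.and ψ := fun h => by cases h
    simp only [Frml.unfold, Bunch.subst, if_neg hφ, if_neg hψ]
  | _ => simp only [Frml.unfold, Bunch.subst, ite_self]

theorem BEquiv.subst {Δ Δ' : Bunch} (h : BEquiv Δ Δ') : BEquiv (Δ.subst ψ₀) (Δ'.subst ψ₀) := by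
  induction h with
  | refl => exact .refl _
  | symm _ ih => exact ih.symm
  | trans _ _ ih₁ ih₂ => exact ih₁.trans ih₂
  | commaComm => exact .commaComm _ _
  | semicComm => exact .semicComm _ _
  | commaAssoc => exact .commaAssoc _ _ _
  | semicAssoc => exact .semicAssoc _ _ _
  | commaUnit => exact .commaUnit _
  | semicUnit => exact .semicUnit _
  | ctx C _ ih => rw [Bunch.subst_fill, Bunch.subst_fill]; exact .ctx _ ih

theorem Bunch.subst_replaceableBy : ∀ Γ : Bunch, ReplaceableBy (Γ.subst ψ₀) Γ
  | .frml ψ => by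
    by_cases hψ : ψ = ψ₀
    · subst hψ; simpa only [subst_frml_self] using ψ.unfold_replaceableBy
    · simpa only [subst_frml_of_ne ψ₀ hψ] using ReplaceableBy.refl _
  | .mempty => .refl _
  | .aempty => .refl _
  | .comma Δ₁ Δ₂ => (subst_replaceableBy Δ₁).comma (subst_replaceableBy Δ₂)
  | .semic Δ₁ Δ₂ => (subst_replaceableBy Δ₁).semic (subst_replaceableBy Δ₂)

theorem Frml.unfold_subst_replaceableBy (ψ : Frml) :
    ReplaceableBy (ψ.unfold.subst ψ₀) ((Bunch.frml ψ).subst ψ₀) := by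
  refine (ψ.unfold.subst_replaceableBy ψ₀).trans ?_
  by_cases hψ : ψ = ψ₀
  · subst hψ; simpa only [Bunch.subst_frml_self] using ReplaceableBy.refl _
  · simpa only [Bunch.subst_frml_of_ne ψ₀ hψ] using ψ.unfold_replaceableBy

end Subst

theorem Proves.subst (ψ₀ : Frml) {Γ : Bunch} {χ : Frml} (hp : Proves Γ χ) :
    Proves (Γ.subst ψ₀) χ := by
  induction hp with
  | ax a => rw [Bunch.subst_frml_of_unfold_eq ψ₀ rfl]; exact .ax a
  | equiv _ he ih => exact .equiv ih (he.subst ψ₀)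
  | weaken _ _ ih => rw [Bunch.subst_fill] at *; exact .weaken _ ih
  | contract _ _ ih => rw [Bunch.subst_fill] at *; exact .contract _ ih
  | empR => exact .empR
  | empL _ _ ih =>
    rw [Bunch.subst_fill] at *; exact Frml.unfold_subst_replaceableBy ψ₀ .emp _ ih
  | sepR _ _ ih₁ ih₂ => exact .sepR ih₁ ih₂
  | @sepL _ φ ψ _ _ ih =>
    rw [Bunch.subst_fill] at *; exact Frml.unfold_subst_replaceableBy ψ₀ (φ.sep ψ) _ ih
  | @wandR _ φ _ _ ih =>
    exact .wandR (((ReplaceableBy.refl _).comma ((Bunch.frml φ).subst_replaceableBy ψ₀)) .hole ih)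
  | @wandL _ _ _ φ ψ _ _ _ ih₁ ih₂ =>
    rw [Bunch.subst_fill] at *
    simp only [Bunch.subst_comma, Bunch.subst_frml_of_unfold_eq ψ₀ (ψ := φ.wand ψ) rfl]
    exact .wandL _ ih₁ (((ReplaceableBy.refl _).comma ((Bunch.frml ψ).subst_replaceableBy ψ₀)) _ ih₂)
  | topR => exact .topR
  | topL _ _ ih =>
    rw [Bunch.subst_fill] at *; exact Frml.unfold_subst_replaceableBy ψ₀ .top _ ih
  | andR _ _ ih₁ ih₂ => exact .andR ih₁ ih₂
  | @andL _ φ ψ _ _ ih =>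
    rw [Bunch.subst_fill] at *; exact Frml.unfold_subst_replaceableBy ψ₀ (φ.and ψ) _ ih
  | @impR _ φ _ _ ih =>
    exact .impR (((ReplaceableBy.refl _).semic ((Bunch.frml φ).subst_replaceableBy ψ₀)) .hole ih)
  | @impL _ _ _ φ ψ _ _ _ ih₁ ih₂ =>
    rw [Bunch.subst_fill] at *
    simp only [Bunch.subst_semic, Bunch.subst_frml_of_unfold_eq ψ₀ (ψ := φ.imp ψ) rfl]
    exact .impL _ ih₁ (((ReplaceableBy.refl _).semic ((Bunch.frml ψ).subst_replaceableBy ψ₀)) _ ih₂)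
  | botL _ => rw [Bunch.subst_fill, Bunch.subst_frml_of_unfold_eq ψ₀ rfl]; exact .botL _
  | orR1 _ ih => exact .orR1 ih
  | orR2 _ ih => exact .orR2 ih
  | @orL _ φ ψ _ _ _ ih₁ ih₂ =>
    rw [Bunch.subst_fill] at *
    rw [Bunch.subst_frml_of_unfold_eq ψ₀ rfl]
    exact .orL _ ((Bunch.frml φ).subst_replaceableBy ψ₀ _ ih₁)
      ((Bunch.frml ψ).subst_replaceableBy ψ₀ _ ih₂)

theorem Frml.replaceableBy_unfold (ψ : Frml) : ReplaceableBy (.frml ψ) ψ.unfold := by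
  intro C χ hp
  have h := hp.subst ψ
  rw [Bunch.subst_fill, Bunch.subst_frml_self, ← Frml.unfold_subst_self ψ, ← Bunch.subst_fill] at h
  exact (C.fill ψ.unfold).subst_replaceableBy ψ .hole h

theorem Bunch.replaceableBy_collapse : ∀ Δ : Bunch, ReplaceableBy Δ (.frml Δ.collapse)
  | .frml _ => .refl _
  | .mempty => Frml.emp.unfold_replaceableBy
  | .aempty => Frml.top.unfold_replaceableBy
  | .comma Δ₁ Δ₂ => (Δ₁.replaceableBy_collapse.comma Δ₂.replaceableBy_collapse).trans
      (Frml.unfold_replaceableBy (.sep _ _))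
  | .semic Δ₁ Δ₂ => (Δ₁.replaceableBy_collapse.semic Δ₂.replaceableBy_collapse).trans
      (Frml.unfold_replaceableBy (.and _ _))

theorem Bunch.collapse_replaceableBy : ∀ Δ : Bunch, ReplaceableBy (.frml Δ.collapse) Δ
  | .frml _ => .refl _
  | .mempty => Frml.emp.replaceableBy_unfold
  | .aempty => Frml.top.replaceableBy_unfold
  | .comma Δ₁ Δ₂ => (Frml.replaceableBy_unfold (.sep _ _)).trans
      (Δ₁.collapse_replaceableBy.comma Δ₂.collapse_replaceableBy)
  | .semic Δ₁ Δ₂ => (Frml.replaceableBy_unfold (.and _ _)).trans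
      (Δ₁.collapse_replaceableBy.semic Δ₂.collapse_replaceableBy)

theorem mem_clB_iff {X : Set Bunch} {Δ : Bunch} : Δ ∈ clB X ↔ ∀ φ, X ⊆ pr φ → Proves Δ φ :=
  ⟨fun h φ hX => h _ ⟨φ, rfl, hX⟩, by rintro h _ ⟨φ, rfl, hX⟩; exact h φ hX⟩

theorem ClosedB.mem_of_proves {X : Set Bunch} (hX : ClosedB X) {Δ Δ' : Bunch}
    (h : ∀ φ, Proves Δ φ → Proves Δ' φ) (hΔ : Δ ∈ X) : Δ' ∈ X := by
  rw [← hX, mem_clB_iff]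
  exact fun φ hφ => h φ (hφ hΔ)

/-- basic properties of closed sets of bunches. -/
theorem closed_set_laws (X : Set Bunch) (hX : ClosedB X) :
    (Bunch.frml .bot ∈ X) ∧
    (∀ Δ Δ' : Bunch, Δ ∈ X → Bunch.semic Δ Δ' ∈ X) ∧
    (∀ Δ : Bunch, Bunch.semic Δ Δ ∈ X → Δ ∈ X) ∧
    (∀ Δ : Bunch, Δ ∈ X ↔ Bunch.frml Δ.collapse ∈ X) := by
  refine ⟨?_, fun _ _ => hX.mem_of_proves fun _ => .weaken .hole,
    fun _ => hX.mem_of_proves fun _ => .contract .hole,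
    fun Δ => ⟨hX.mem_of_proves fun _ => Δ.replaceableBy_collapse .hole,
      hX.mem_of_proves fun _ => Δ.collapse_replaceableBy .hole⟩⟩
  rw [← hX, mem_clB_iff]
  exact fun _ _ => .botL .hole
end

section
/- Okada's property for the syntactic BI algebra: interpreting atoms by [[a]] = ⟦a⟧ in the BI algebra C of closed sets of bunches, every formula φ satisfies φ ∈ [[φ]] ⊆ ⟦φ⟧, where the leftmost φ is the single-leaf bunch. -/
/-- Interpretation of formulas in the syntactic BI algebra `C` of closed sets of
bunches, with atoms interpreted by `[[a]] = ⟦a⟧`. -/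
def semC : Frml → Set Bunch
  | .atom a => pr (.atom a)
  | .top => Set.univ
  | .bot => clB ∅
  | .emp => clB {Bunch.mempty}
  | .and φ ψ => semC φ ∩ semC ψ
  | .or φ ψ => clB (semC φ ∪ semC ψ)
  | .imp φ ψ => {Δ | ∀ Δ' ∈ semC φ, Bunch.semic Δ Δ' ∈ semC ψ}
  | .sep φ ψ => clB {b | ∃ Δ ∈ semC φ, ∃ Δ' ∈ semC ψ, b = Bunch.comma Δ Δ'}
  | .wand φ ψ => {Δ | ∀ Δ' ∈ semC φ, Bunch.comma Δ Δ' ∈ semC ψ}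

/-!
Both halves are proved together by induction on `φ`. Every `[[φ]]` is closed under bunch
equivalence, weakening and the left rules for `∧`, `→` and `-*`, in any context (`ProofClosed`):
principal sets are by the rules themselves, and closures, intersections and the residuals of `C`
preserve this. So the left rule of the main connective of `φ`, applied to the leaves given by the
induction hypothesis, puts the leaf `φ` into `[[φ]]`, and the right rule gives `[[φ]] ⊆ ⟦φ⟧`
(for `∧` after contracting `Δ` to `Δ; Δ`).
-/

lemma mem_clB {X : Set Bunch} {Δ : Bunch} :
    Δ ∈ clB X ↔ ∀ φ : Frml, X ⊆ pr φ → Proves Δ φ :=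
  ⟨fun h φ hX => h (pr φ) ⟨φ, rfl, hX⟩, fun h _ ⟨φ, hY, hX⟩ => hY ▸ h φ (hY ▸ hX)⟩

lemma clB_subset_pr {X : Set Bunch} {φ : Frml} (h : X ⊆ pr φ) : clB X ⊆ pr φ :=
  fun _ hΔ => mem_clB.1 hΔ φ h

lemma BEquiv.aempty_semic (Δ : Bunch) : BEquiv (.semic .aempty Δ) Δ :=
  (BEquiv.semicComm _ _).trans (BEquiv.semicUnit Δ)

lemma BEquiv.mempty_comma (Δ : Bunch) : BEquiv (.comma .mempty Δ) Δ :=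
  (BEquiv.commaComm _ _).trans (BEquiv.commaUnit Δ)

structure ProofClosed (X : Set Bunch) : Prop where
  equiv : ∀ {Δ Δ' : Bunch}, BEquiv Δ Δ' → Δ' ∈ X → Δ ∈ X
  weaken : ∀ (C : BCtx) {Δ₁ Δ₂ : Bunch}, C.fill Δ₁ ∈ X → C.fill (.semic Δ₁ Δ₂) ∈ X
  andL : ∀ (C : BCtx) {φ ψ : Frml},
    C.fill (.semic (.frml φ) (.frml ψ)) ∈ X → C.fill (.frml (.and φ ψ)) ∈ X
  impL : ∀ (C : BCtx) {Δ₁ Δ₂ : Bunch} {φ ψ : Frml}, Proves Δ₁ φ →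
    C.fill (.semic Δ₂ (.frml ψ)) ∈ X → C.fill (.semic (.semic Δ₁ Δ₂) (.frml (.imp φ ψ))) ∈ X
  wandL : ∀ (C : BCtx) {Δ₁ Δ₂ : Bunch} {φ ψ : Frml}, Proves Δ₁ φ →
    C.fill (.comma Δ₂ (.frml ψ)) ∈ X → C.fill (.comma (.comma Δ₁ Δ₂) (.frml (.wand φ ψ))) ∈ X

namespace ProofClosed

lemma pr (χ : Frml) : ProofClosed (pr χ) where
  equiv e h := Proves.equiv h e
  weaken C _ _ := Proves.weaken C
  andL C _ _ := Proves.andL C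
  impL C _ _ _ _ := Proves.impL C
  wandL C _ _ _ _ := Proves.wandL C

lemma univ : ProofClosed Set.univ := by
  constructor <;> intros <;> trivial

lemma clB (X : Set Bunch) : ProofClosed (clB X) where
  equiv e h := mem_clB.2 fun φ hX => (pr φ).equiv e (mem_clB.1 h φ hX)
  weaken C _ _ h := mem_clB.2 fun φ hX => (pr φ).weaken C (mem_clB.1 h φ hX)
  andL C _ _ h := mem_clB.2 fun φ hX => (pr φ).andL C (mem_clB.1 h φ hX)
  impL C _ _ _ _ h₁ h₂ := mem_clB.2 fun φ hX => (pr φ).impL C h₁ (mem_clB.1 h₂ φ hX)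
  wandL C _ _ _ _ h₁ h₂ := mem_clB.2 fun φ hX => (pr φ).wandL C h₁ (mem_clB.1 h₂ φ hX)

lemma inter {X Y : Set Bunch} (hX : ProofClosed X) (hY : ProofClosed Y) :
    ProofClosed (X ∩ Y) where
  equiv e h := ⟨hX.equiv e h.1, hY.equiv e h.2⟩
  weaken C _ _ h := ⟨hX.weaken C h.1, hY.weaken C h.2⟩
  andL C _ _ h := ⟨hX.andL C h.1, hY.andL C h.2⟩
  impL C _ _ _ _ h₁ h₂ := ⟨hX.impL C h₁ h₂.1, hY.impL C h₁ h₂.2⟩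
  wandL C _ _ _ _ h₁ h₂ := ⟨hX.wandL C h₁ h₂.1, hY.wandL C h₁ h₂.2⟩

lemma imp {Y Z : Set Bunch} (hZ : ProofClosed Z) :
    ProofClosed {Δ | ∀ Δ' ∈ Y, Bunch.semic Δ Δ' ∈ Z} where
  equiv e h Δ' hΔ' := hZ.equiv (BEquiv.ctx (.semicL .hole Δ') e) (h Δ' hΔ')
  weaken C _ _ h Δ' hΔ' := hZ.weaken (.semicL C Δ') (h Δ' hΔ')
  andL C _ _ h Δ' hΔ' := hZ.andL (.semicL C Δ') (h Δ' hΔ')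
  impL C _ _ _ _ h₁ h₂ Δ' hΔ' := hZ.impL (.semicL C Δ') h₁ (h₂ Δ' hΔ')
  wandL C _ _ _ _ h₁ h₂ Δ' hΔ' := hZ.wandL (.semicL C Δ') h₁ (h₂ Δ' hΔ')

lemma wand {Y Z : Set Bunch} (hZ : ProofClosed Z) :
    ProofClosed {Δ | ∀ Δ' ∈ Y, Bunch.comma Δ Δ' ∈ Z} where
  equiv e h Δ' hΔ' := hZ.equiv (BEquiv.ctx (.commaL .hole Δ') e) (h Δ' hΔ')
  weaken C _ _ h Δ' hΔ' := hZ.weaken (.commaL C Δ') (h Δ' hΔ')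
  andL C _ _ h Δ' hΔ' := hZ.andL (.commaL C Δ') (h Δ' hΔ')
  impL C _ _ _ _ h₁ h₂ Δ' hΔ' := hZ.impL (.commaL C Δ') h₁ (h₂ Δ' hΔ')
  wandL C _ _ _ _ h₁ h₂ Δ' hΔ' := hZ.wandL (.commaL C Δ') h₁ (h₂ Δ' hΔ')

end ProofClosed

lemma proofClosed_semC : ∀ φ : Frml, ProofClosed (semC φ)
  | .atom a => .pr (.atom a)
  | .top => .univ
  | .bot => .clB _
  | .emp => .clB _
  | .and φ ψ => (proofClosed_semC φ).inter (proofClosed_semC ψ)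
  | .or _ _ => .clB _
  | .imp _ ψ => (proofClosed_semC ψ).imp
  | .sep _ _ => .clB _
  | .wand _ ψ => (proofClosed_semC ψ).wand

lemma proves_top (Δ : Bunch) : Proves Δ .top :=
  Proves.equiv (Proves.weaken .hole Proves.topR) (BEquiv.aempty_semic Δ).symm

def OkadaProperty (φ : Frml) : Prop := Bunch.frml φ ∈ semC φ ∧ semC φ ⊆ pr φ

namespace OkadaProperty

variable {φ ψ : Frml}

lemma atom (a : Nat) : OkadaProperty (.atom a) := ⟨Proves.ax a, subset_rfl⟩

lemma top : OkadaProperty .top := ⟨trivial, fun Δ _ => proves_top Δ⟩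

lemma bot : OkadaProperty .bot :=
  ⟨mem_clB.2 fun _ _ => Proves.botL .hole, clB_subset_pr (Set.empty_subset _)⟩

lemma emp : OkadaProperty .emp :=
  ⟨mem_clB.2 fun _ h => Proves.empL .hole (h rfl),
    clB_subset_pr (Set.singleton_subset_iff.2 Proves.empR)⟩

lemma and (hφ : OkadaProperty φ) (hψ : OkadaProperty ψ) : OkadaProperty (.and φ ψ) := by
  have Pφ := proofClosed_semC φ
  have Pψ := proofClosed_semC ψ
  refine ⟨⟨Pφ.andL .hole (Pφ.weaken .hole hφ.1), Pψ.andL .hole ?_⟩,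
    fun Δ hΔ => Proves.contract .hole (Proves.andR (hφ.2 hΔ.1) (hψ.2 hΔ.2))⟩
  exact Pψ.equiv (BEquiv.semicComm _ _) (Pψ.weaken .hole hψ.1)

lemma or (hφ : OkadaProperty φ) (hψ : OkadaProperty ψ) : OkadaProperty (.or φ ψ) := by
  refine ⟨mem_clB.2 fun _ h => Proves.orL .hole (h (.inl hφ.1)) (h (.inr hψ.1)),
    clB_subset_pr ?_⟩
  rintro Δ (h | h)
  · exact Proves.orR1 (hφ.2 h)
  · exact Proves.orR2 (hψ.2 h)

lemma imp (hφ : OkadaProperty φ) (hψ : OkadaProperty ψ) : OkadaProperty (.imp φ ψ) := by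
  refine ⟨fun Δ' hΔ' => ?_, fun Δ hΔ => Proves.impR (hψ.2 (hΔ _ hφ.1))⟩
  have Pψ := proofClosed_semC ψ
  have hψ' : Bunch.semic .aempty (.frml ψ) ∈ semC ψ := Pψ.equiv (BEquiv.aempty_semic _) hψ.1
  refine Pψ.equiv ?_ (Pψ.impL .hole (hφ.2 hΔ') hψ')
  exact (BEquiv.semicComm _ _).trans (BEquiv.ctx (.semicL .hole _) (BEquiv.semicUnit Δ').symm)

lemma sep (hφ : OkadaProperty φ) (hψ : OkadaProperty ψ) : OkadaProperty (.sep φ ψ) := by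
  refine ⟨mem_clB.2 fun _ h => Proves.sepL .hole (h ⟨_, hφ.1, _, hψ.1, rfl⟩), clB_subset_pr ?_⟩
  rintro Δ ⟨Δ₁, h₁, Δ₂, h₂, rfl⟩
  exact Proves.sepR (hφ.2 h₁) (hψ.2 h₂)

lemma wand (hφ : OkadaProperty φ) (hψ : OkadaProperty ψ) : OkadaProperty (.wand φ ψ) := by
  refine ⟨fun Δ' hΔ' => ?_, fun Δ hΔ => Proves.wandR (hψ.2 (hΔ _ hφ.1))⟩
  have Pψ := proofClosed_semC ψ
  have hψ' : Bunch.comma .mempty (.frml ψ) ∈ semC ψ := Pψ.equiv (BEquiv.mempty_comma _) hψ.1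
  refine Pψ.equiv ?_ (Pψ.wandL .hole (hφ.2 hΔ') hψ')
  exact (BEquiv.commaComm _ _).trans (BEquiv.ctx (.commaL .hole _) (BEquiv.commaUnit Δ').symm)

end OkadaProperty

/-- Okada's property: every formula `φ` satisfies
`φ ∈ [[φ]] ⊆ ⟦φ⟧`. -/
theorem okada_property (φ : Frml) :
    Bunch.frml φ ∈ semC φ ∧ semC φ ⊆ pr φ := by
  induction φ with
  | atom a => exact OkadaProperty.atom a
  | top => exact OkadaProperty.top
  | bot => exact OkadaProperty.bot
  | emp => exact OkadaProperty.emp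
  | and _ _ hφ hψ => exact OkadaProperty.and hφ hψ
  | or _ _ hφ hψ => exact OkadaProperty.or hφ hψ
  | imp _ _ hφ hψ => exact OkadaProperty.imp hφ hψ
  | sep _ _ hφ hψ => exact OkadaProperty.sep hφ hψ
  | wand _ _ hφ hψ => exact OkadaProperty.wand hφ hψ
end
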